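/- If (a,b) has joint density k(a,b) = 2/(π²·a·b) on {a > 0, |1−a| < b < 1+a}, then x = max{a,b} has density (4/π²)·(ln(x) − ln|1−x|)/x for x > 1/2 (and 0 for 0 < x ≤ 1/2). -/

import Mathlib

open Real MeasureTheory

/-- Joint side-density of a uniform triangle with base `c = 1`. -/
noncomputable def k (a b : ℝ) : ℝ :=
  if 0 < a ∧ |1 - a| < b ∧ b < 1 + a then 2 / (π ^ 2 * a * b) else 0

open Set

/-! The density `k` is symmetric, so the two integrals in the theorem coincide. On the line
`a = x` its support is `|1 - x| < b < 1 + x`, which meets `(0, x)` in `(|1 - x|, x)`: this interval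
is empty for `x ≤ 1/2`, and otherwise the integral of `b ↦ 1 / b` over it gives the logarithms.
At `x = 1` the interval is `(0, 1)`, where `1 / b` is not integrable; both sides are then `0`
(the right-hand side because `log 0 = 0`). -/

lemma k_comm (a b : ℝ) : k a b = k b a := by
  have hsupp : (0 < a ∧ |1 - a| < b ∧ b < 1 + a) ↔ (0 < b ∧ |1 - b| < a ∧ a < 1 + b) := by
    simp only [abs_lt]
    constructor <;> rintro ⟨_, ⟨_, _⟩, _⟩ <;> refine ⟨?_, ⟨?_, ?_⟩, ?_⟩ <;> linarith
  simp only [k, hsupp, mul_right_comm _ a b]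

lemma k_eq_indicator {x : ℝ} (hx : 0 < x) :
    k x = (Ioo |1 - x| (1 + x)).indicator fun b => 2 / (π ^ 2 * x) / b := by
  ext b
  simp only [k, indicator, mem_Ioo, hx, true_and, div_div]

lemma setIntegral_k_Ioo {x : ℝ} (hx : 0 < x) :
    ∫ b in Ioo 0 x, k x b = ∫ b in Ioo |1 - x| x, 2 / (π ^ 2 * x) / b := by
  rw [k_eq_indicator hx, setIntegral_indicator measurableSet_Ioo, Ioo_inter_Ioo,
    max_eq_right (abs_nonneg _), min_eq_left (by linarith)]

lemma integral_Ioo_const_div {s t : ℝ} (c : ℝ) (hs : 0 < s) (hst : s ≤ t) :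
    ∫ b in Ioo s t, c / b = c * (log t - log s) := by
  simp_rw [div_eq_mul_inv c]
  rw [← integral_Ioc_eq_integral_Ioo, ← intervalIntegral.integral_of_le hst,
    intervalIntegral.integral_const_mul, integral_inv_of_pos hs (hs.trans_le hst),
    log_div (hs.trans_le hst).ne' hs.ne']

lemma integral_Ioo_zero_const_div (c t : ℝ) : ∫ b in Ioo 0 t, c / b = 0 := by
  rcases eq_or_ne c 0 with rfl | hc
  · simp
  rcases le_or_gt t 0 with ht | ht
  · rw [Ioo_eq_empty ht.not_gt, setIntegral_empty]
  refine integral_undef fun hint => ?_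
  have hinv : IntegrableOn (fun b : ℝ => b⁻¹) (Ioo 0 t) := by
    simpa [IntegrableOn, div_eq_mul_inv, hc] using hint.const_mul c⁻¹
  rw [← intervalIntegrable_iff_integrableOn_Ioo_of_le ht.le, intervalIntegrable_inv_iff] at hinv
  simp [ht.ne] at hinv

theorem uniform_triangle_max_density (x : ℝ) :
    (1 / 2 < x →
      (∫ b in Set.Ioo (0:ℝ) x, k x b) + (∫ a in Set.Ioo (0:ℝ) x, k a x) =
        (4 / π ^ 2) * (Real.log x - Real.log |1 - x|) / x) ∧
    (0 < x → x ≤ 1 / 2 →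
      (∫ b in Set.Ioo (0:ℝ) x, k x b) + (∫ a in Set.Ioo (0:ℝ) x, k a x) = 0) := by
  have hsymm : ∫ a in Ioo 0 x, k a x = ∫ b in Ioo 0 x, k x b := by simp_rw [k_comm _ x]
  rw [hsymm]
  refine ⟨fun hx => ?_, fun hx0 hx => ?_⟩
  · rw [setIntegral_k_Ioo (by linarith)]
    rcases eq_or_ne x 1 with rfl | hx1
    · simp [integral_Ioo_zero_const_div]
    have habs : 0 < |1 - x| := abs_pos.2 (sub_ne_zero.2 hx1.symm)
    rw [integral_Ioo_const_div _ habs (by rw [abs_le]; constructor <;> linarith)]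
    ring
  · rw [setIntegral_k_Ioo hx0, Ioo_eq_empty (by rw [abs_of_nonneg] <;> linarith),
      setIntegral_empty, add_zero]
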